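/- arXiv:1901.09250 — 4 statements merged into one kernel-verified Lean document; each statement's English description precedes it below -/
import Mathlib

section
/- Let H be a finite group and P ⊆ A(H) a prime ideal of the Burnside ring. Then there exist a subgroup K ⊆ H and p either a prime number or 0 such that P = P(K,p), the preimage of pℤ under the character map char^H_K : A(H) → ℤ, [S] ↦ |S^K|. -/
noncomputable section

/-- The vector of marks of a finite `H`-set `S`: the function sending a subgroup
`K ⊆ H` to the number of `K`-fixed points of `S`. -/
def markVec (H : Type) [Group H] (S : Type) [MulAction H S] : Subgroup H → ℤ :=
  fun K => (Nat.card {s : S // ∀ k ∈ K, k • s = s} : ℤ)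

/-- The Burnside ring `A(H)` of a finite group `H`, realized (via the injective mark
homomorphism) as the subring of `∏_{K ≤ H} ℤ` generated by the mark vectors of
finite `H`-sets. -/
def BurnsideRing (H : Type) [Group H] : Subring (Subgroup H → ℤ) :=
  Subring.closure
    {v | ∃ (S : Type) (_ : Fintype S) (m : MulAction H S), v = @markVec H _ S m}

/-- The class `[S] ∈ A(H)` of a finite `H`-set `S`. -/
def classOf (H : Type) [Group H] (S : Type) [Fintype S] [MulAction H S] :
    BurnsideRing H :=
  ⟨markVec H S, Subring.subset_closure ⟨S, ‹_›, ‹_›, rfl⟩⟩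

/-- The character map `char^H_K : A(H) → ℤ`, sending `[S]` to `|S^K|`. -/
def charHom (H : Type) [Group H] (K : Subgroup H) : BurnsideRing H →+* ℤ :=
  (Pi.evalRingHom (fun _ => ℤ) K).comp (BurnsideRing H).subtype

/-- The ideal `P(K, p) = (char^H_K)⁻¹(pℤ)` of the Burnside ring `A(H)`. -/
def idealP (H : Type) [Group H] (K : Subgroup H) (p : ℕ) : Ideal (BurnsideRing H) :=
  Ideal.comap (charHom H K) (Ideal.span {(p : ℤ)})

/-- Dress's classification: every prime ideal of the Burnside ring `A(H)` of a
finite group `H` is of the form `P(K, p)` for some subgroup `K ⊆ H` and `p` either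
a prime number or `0`. -/
theorem prime_ideal_eq_idealP (H : Type) [Group H] [Finite H]
    (P : Ideal (BurnsideRing H)) (hP : P.IsPrime) :
    ∃ (K : Subgroup H) (p : ℕ), (p = 0 ∨ p.Prime) ∧ P = idealP H K p := by
  classical
  haveI : Fintype (Subgroup H) := Fintype.ofFinite _
  -- the finite product of the kernels of the character maps is zero, hence in P
  have hprod : (∏ K : Subgroup H, RingHom.ker (charHom H K)) ≤ P := by
    refine le_trans Ideal.prod_le_inf ?_
    intro x hx
    have hx0 : x = 0 := by
      have h : ∀ K : Subgroup H, (x : Subgroup H → ℤ) K = 0 := by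
        intro K
        have hle : Finset.univ.inf (fun K => RingHom.ker (charHom H K)) ≤
            RingHom.ker (charHom H K) := Finset.inf_le (Finset.mem_univ K)
        have := hle hx
        simpa [RingHom.mem_ker, charHom] using this
      ext K
      simpa using h K
    simp [hx0]
  obtain ⟨K, -, hK⟩ := (Ideal.IsPrime.prod_le hP).mp hprod
  have hsurj : Function.Surjective (charHom H K) := fun n =>
    ⟨(n : BurnsideRing H), by simp⟩
  have hQprime : (P.map (charHom H K)).IsPrime :=
    Ideal.map_isPrime_of_surjective hsurj hK
  obtain ⟨a, ha⟩ : ∃ a : ℤ, P.map (charHom H K) = Ideal.span {a} :=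
    (IsPrincipalIdealRing.principal _).principal
  refine ⟨K, a.natAbs, ?_, ?_⟩
  · rcases eq_or_ne a 0 with h0 | h0
    · exact Or.inl (by simp [h0])
    · refine Or.inr ?_
      rw [ha] at hQprime
      have : Prime a := (Ideal.span_singleton_prime h0).mp hQprime
      exact Int.prime_iff_natAbs_prime.mp this
  · have hspan : Ideal.span {(a.natAbs : ℤ)} = Ideal.span ({a} : Set ℤ) := by
      rw [Ideal.span_singleton_eq_span_singleton]
      exact (Int.associated_natAbs a).symm
    have : idealP H K a.natAbs = Ideal.comap (charHom H K) (P.map (charHom H K)) := by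
      rw [idealP, hspan, ha]
    rw [this, Ideal.comap_map_of_surjective _ hsurj]
    have : Ideal.comap (charHom H K) ⊥ ≤ P := by
      intro x hx
      exact hK (by simpa [RingHom.mem_ker] using hx)
    exact (sup_eq_left.mpr this).symm
end
end

section
/- Let H be a finite group, K ⊆ H a subgroup, and p = 0. Then P(K,0) = P(L,0) holds for a subgroup L ⊆ H if and only if K and L are conjugate in H. -/
noncomputable section

-- auxiliary lemmas

lemma idealP_zero_eq_ker (H : Type) [Group H] (K : Subgroup H) :
    idealP H K 0 = RingHom.ker (charHom H K) := by
  simp [idealP, RingHom.ker, Ideal.span_singleton_eq_bot.mpr rfl]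

lemma hom_eq_of_ker_eq {A : Type*} [Ring A] (f g : A →+* ℤ)
    (h : RingHom.ker f = RingHom.ker g) : f = g := by
  ext a
  have h1 : a - ((f a : ℤ) : A) ∈ RingHom.ker f := by
    simp [RingHom.mem_ker, map_sub, map_intCast]
  rw [h, RingHom.mem_ker, map_sub, map_intCast, sub_eq_zero] at h1
  exact h1.symm

lemma markVec_conj (H : Type) [Group H] (S : Type) [MulAction H S]
    (K L : Subgroup H) (h : H) (hKL : Subgroup.map (MulAut.conj h).toMonoidHom K = L) :
    markVec H S K = markVec H S L := by
  unfold markVec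
  congr 1
  refine Nat.card_congr ⟨fun s => ⟨h • s.1, ?_⟩, fun s => ⟨h⁻¹ • s.1, ?_⟩, ?_, ?_⟩
  · rintro l hl
    rw [← hKL] at hl
    obtain ⟨k, hk, rfl⟩ := hl
    show (h * k * h⁻¹) • h • s.1 = h • s.1
    rw [mul_smul, mul_smul, inv_smul_smul, s.2 k hk]
  · rintro k hk
    have hl : h * k * h⁻¹ ∈ L := by
      rw [← hKL]; exact ⟨k, hk, rfl⟩
    have := s.2 _ hl
    calc k • h⁻¹ • s.1 = h⁻¹ • (h * k * h⁻¹) • s.1 := by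
          simp [mul_smul]
      _ = h⁻¹ • s.1 := by rw [this]
  · intro s; ext; simp
  · intro s; ext; simp

lemma char_eq_of_conj (H : Type) [Group H] (K L : Subgroup H) (h : H)
    (hKL : Subgroup.map (MulAut.conj h).toMonoidHom K = L) :
    charHom H K = charHom H L := by
  ext ⟨v, hv⟩
  show v K = v L
  induction hv using Subring.closure_induction with
  | mem x hx =>
    obtain ⟨S, ft, m, rfl⟩ := hx
    exact @markVec_conj H _ S m K L h hKL
  | zero => rfl
  | one => rfl
  | add x y _ _ hx hy => simp [hx, hy]
  | neg x _ hx => simp [hx]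
  | mul x y _ _ hx hy => simp [hx, hy]

/-- For subgroups `K, L` of a finite group `H`, `P(K, 0) = P(L, 0)` in the Burnside
ring `A(H)` if and only if `K` and `L` are conjugate in `H`. -/
theorem idealP_zero_eq_iff_conj (H : Type) [Group H] [Finite H] (K L : Subgroup H) :
    idealP H K 0 = idealP H L 0 ↔
      ∃ h : H, Subgroup.map (MulAut.conj h).toMonoidHom K = L := by
  constructor
  · intro heq
    rw [idealP_zero_eq_ker, idealP_zero_eq_ker] at heq
    have hchar := hom_eq_of_ker_eq _ _ heq
    -- for any subgroups M N, get h with map (conj h⁻¹) N ≤ M from marks on H ⧸ M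
    have key : ∀ M N : Subgroup H, charHom H M = charHom H N →
        ∃ h : H, Subgroup.map (MulAut.conj h⁻¹).toMonoidHom N ≤ M := by
      intro M N hc
      have : Fintype (H ⧸ M) := Fintype.ofFinite _
      have h1 : markVec H (H ⧸ M) M = markVec H (H ⧸ M) N := by
        have := congrArg (fun f => f (classOf H (H ⧸ M))) hc
        exact this
      have hne : markVec H (H ⧸ M) M ≠ 0 := by
        unfold markVec
        have : Nonempty {s : H ⧸ M // ∀ k ∈ M, k • s = s} := by
          refine ⟨⟨((1 : H) : H ⧸ M), fun k hk => ?_⟩⟩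
          show ((k * 1 : H) : H ⧸ M) = ((1 : H) : H ⧸ M)
          rw [QuotientGroup.eq]
          simpa using inv_mem hk
        have := Nat.card_pos (α := {s : H ⧸ M // ∀ k ∈ M, k • s = s})
        exact_mod_cast this.ne'
      rw [h1] at hne
      have : Nonempty {s : H ⧸ M // ∀ k ∈ N, k • s = s} := by
        have : Nat.card {s : H ⧸ M // ∀ k ∈ N, k • s = s} ≠ 0 := by
          intro h0; apply hne; unfold markVec; exact_mod_cast h0
        exact (Nat.card_ne_zero.mp this).1
      obtain ⟨⟨x, hx⟩⟩ := this
      obtain ⟨h, rfl⟩ := QuotientGroup.mk_surjective x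
      refine ⟨h, ?_⟩
      rintro y ⟨l, hl, rfl⟩
      have := hx l hl
      rw [show l • ((h : H) : H ⧸ M) = ((l * h : H) : H ⧸ M) from rfl,
        QuotientGroup.eq] at this
      show h⁻¹ * l * h⁻¹⁻¹ ∈ M
      simpa [mul_assoc] using inv_mem this
    obtain ⟨h, hle⟩ := key K L hchar
    obtain ⟨h', hle'⟩ := key L K hchar.symm
    have cardmap : ∀ (g : H) (M : Subgroup H),
        Nat.card (Subgroup.map (MulAut.conj g).toMonoidHom M) = Nat.card M := by
      intro g M
      exact (Nat.card_congr ((MulAut.conj g).subgroupMap M).toEquiv).symm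
    have hcard : Nat.card K ≤ Nat.card L := by
      calc Nat.card K = Nat.card (Subgroup.map (MulAut.conj h'⁻¹).toMonoidHom K) :=
            (cardmap _ _).symm
        _ ≤ Nat.card L := Subgroup.card_le_of_le hle'
    have hmapeq : Subgroup.map (MulAut.conj h⁻¹).toMonoidHom L = K := by
      refine Subgroup.eq_of_le_of_card_ge hle ?_
      rw [cardmap]; exact hcard
    refine ⟨h, ?_⟩
    rw [← hmapeq, Subgroup.map_map]
    have : (MulAut.conj h).toMonoidHom.comp (MulAut.conj h⁻¹).toMonoidHom =
        MonoidHom.id H := by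
      ext x; simp [mul_assoc]
    rw [this, Subgroup.map_id]
  · rintro ⟨h, hKL⟩
    rw [idealP_zero_eq_ker, idealP_zero_eq_ker, char_eq_of_conj H K L h hKL]
end
end

section
/- Let H be a finite group, m a positive integer divisible by |H|, and p a prime. Embed H into the symmetric group S_m via its action on a free H-set of cardinality m (using a bijection with {1,...,m}), and let Syl_p(S_m) be a p-Sylow subgroup of S_m. Regard the coset space S_m/Syl_p(S_m) as an H-set via left multiplication through this embedding. If a subgroup K ⊆ H has a fixed point in S_m/Syl_p(S_m), then K is a p-group. -/
/-- Let `H` be a finite group, `m > 0` a multiple of `|H|`, and `ρ : H → S_m` the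
embedding coming from a free `H`-set of cardinality `m` (so `ρ h` is fixed-point free
for `h ≠ 1`). Let `Syl_p(S_m)` be a `p`-Sylow subgroup of `S_m`, and let `H` act on
the coset space `S_m / Syl_p(S_m)` via `ρ` and left multiplication. If a subgroup
`K ⊆ H` has a fixed point in `S_m / Syl_p(S_m)`, then `K` is a `p`-group. -/
theorem isPGroup_of_fixed_coset (H : Type) [Group H] [Finite H]
    (m : ℕ) (hm : 0 < m) (hdvd : Nat.card H ∣ m)
    (p : ℕ) (hp : p.Prime) [Fact p.Prime]
    (ρ : H →* Equiv.Perm (Fin m))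
    (hfree : ∀ h : H, h ≠ 1 → ∀ x : Fin m, ρ h x ≠ x)
    (P : Sylow p (Equiv.Perm (Fin m)))
    (K : Subgroup H)
    (q : Equiv.Perm (Fin m) ⧸ (P : Subgroup (Equiv.Perm (Fin m))))
    (hq : ∀ k ∈ K, ρ k • q = q) :
    IsPGroup p K := by
  obtain ⟨σ, rfl⟩ := QuotientGroup.mk_surjective q
  have hmem : ∀ k ∈ K, σ⁻¹ * ρ k * σ ∈ (P : Subgroup (Equiv.Perm (Fin m))) := by
    intro k hk
    have := hq k⁻¹ (inv_mem hk)
    rw [show ρ k⁻¹ • (σ : _ ⧸ (P : Subgroup (Equiv.Perm (Fin m)))) = ((ρ k⁻¹ * σ : Equiv.Perm (Fin m)) : _) from rfl, QuotientGroup.eq] at this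
    simpa [mul_assoc] using this
  have hρinj : Function.Injective ρ := by
    rw [injective_iff_map_eq_one]
    intro a ha
    by_contra h
    obtain ⟨x⟩ : Nonempty (Fin m) := ⟨⟨0, hm⟩⟩
    exact hfree a h x (by simp [ha])
  let φ : K →* (P : Subgroup (Equiv.Perm (Fin m))) :=
    { toFun := fun k => ⟨σ⁻¹ * ρ k * σ, hmem k k.2⟩
      map_one' := by ext; simp
      map_mul' := fun a b => by ext; simp [mul_assoc] }
  have hφinj : Function.Injective φ := by
    intro a b hab
    have : σ⁻¹ * ρ (a : H) * σ = σ⁻¹ * ρ (b : H) * σ := congrArg Subtype.val hab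
    have : ρ (a : H) = ρ (b : H) := by
      have := mul_right_cancel this
      exact mul_left_cancel this
    exact Subtype.ext (hρinj this)
  exact P.2.of_injective φ hφinj
end

section
/- Let H be a finite group and p a prime. Two subgroups K, L ⊆ H determine the same prime ideal P(K,p) = P(L,p) of the Burnside ring A(H) if K[p] and L[p] are conjugate in H, where K[p] denotes the smallest normal subgroup of K whose quotient K/K[p] is a p-group. In particular, if K is a p-group then P(K,p) = P({1},p). -/
noncomputable section

/-- The subgroup `K[p]`: the smallest normal subgroup of `K` whose quotient is a
`p`-group, regarded as a subgroup of the ambient group `H`. -/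
def pResidual (H : Type) [Group H] (p : ℕ) (K : Subgroup H) : Subgroup H :=
  Subgroup.map K.subtype
    (sInf {N : Subgroup ↥K | ∃ hN : N.Normal,
      @IsPGroup p (↥K ⧸ N) (@QuotientGroup.Quotient.group _ _ N hN)})

namespace BurnsideAux

variable {H : Type} [Group H]

/-- The defining set of normal subgroups with `p`-group quotient. -/
def resSet (p : ℕ) (K : Subgroup H) : Set (Subgroup ↥K) :=
  {N : Subgroup ↥K | ∃ hN : N.Normal,
      @IsPGroup p (↥K ⧸ N) (@QuotientGroup.Quotient.group _ _ N hN)}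

lemma pResidual_def (p : ℕ) (K : Subgroup H) :
    pResidual H p K = Subgroup.map K.subtype (sInf (resSet p K)) := rfl

lemma normal_sInf_resSet (p : ℕ) (K : Subgroup H) : (sInf (resSet p K)).Normal := by
  constructor
  intro x hx k
  rw [Subgroup.mem_sInf] at hx ⊢
  intro N hN
  obtain ⟨hnorm, -⟩ := id hN
  exact hnorm.conj_mem x (hx N hN) k

lemma mem_pResidual (p : ℕ) (K : Subgroup H) {n : ↥K} (hn : n ∈ sInf (resSet p K)) :
    (n : H) ∈ pResidual H p K := ⟨n, hn, rfl⟩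

lemma pResidual_conj_mem (p : ℕ) (K : Subgroup H) {x : H} (hx : x ∈ pResidual H p K)
    (k : ↥K) : (k : H) * x * (k : H)⁻¹ ∈ pResidual H p K := by
  obtain ⟨n, hn, rfl⟩ := hx
  exact ⟨k * n * k⁻¹, (normal_sInf_resSet p K).conj_mem n hn k, rfl⟩

lemma isPGroup_quot_sInf (p : ℕ) (hp : p.Prime) (K : Subgroup H) [Finite H] :
    @IsPGroup p (↥K ⧸ sInf (resSet p K))
      (@QuotientGroup.Quotient.group _ _ _ (normal_sInf_resSet p K)) := by
  haveI := normal_sInf_resSet p K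
  set n := Nat.card ↥K with hn
  intro y
  obtain ⟨x, rfl⟩ := QuotientGroup.mk_surjective y
  refine ⟨n, ?_⟩
  rw [← QuotientGroup.mk_pow, QuotientGroup.eq_one_iff]
  rw [Subgroup.mem_sInf]
  intro N' hN'
  obtain ⟨hnorm', hpgrp'⟩ := hN'
  haveI := hnorm'
  set q := QuotientGroup.mk' N' with hq
  obtain ⟨k, hk⟩ := hpgrp' (q x)
  obtain ⟨j, hjk, hj⟩ := (Nat.dvd_prime_pow hp).mp (orderOf_dvd_of_pow_eq_one hk)
  have hdvd : p ^ j ∣ Nat.card ↥K := by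
    have h1 : p ^ j ∣ Nat.card (↥K ⧸ N') := hj ▸ orderOf_dvd_natCard (q x)
    exact h1.trans (Subgroup.card_quotient_dvd_card N')
  have hjn : j ≤ n := by
    have hle : p ^ j ≤ n := Nat.le_of_dvd Nat.card_pos hdvd
    have : j < p ^ j := Nat.lt_pow_self (n := j) hp.one_lt
    omega
  have h1 : (q x) ^ p ^ j = 1 := hj ▸ pow_orderOf_eq_one (q x)
  have h2 : (q x) ^ p ^ n = 1 := by
    rw [← Nat.sub_add_cancel hjn, pow_add, pow_mul, ← pow_mul, mul_comm, pow_mul, h1, one_pow]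
  rw [← QuotientGroup.eq_one_iff, QuotientGroup.mk_pow]
  exact h2

lemma markVec_modEq (p : ℕ) (hp : p.Prime) [Finite H] (K : Subgroup H)
    (S : Type) [Fintype S] [m : MulAction H S] :
    ((markVec H S K : ZMod p)) = ((markVec H S (pResidual H p K) : ZMod p)) := by
  classical
  haveI : Fact p.Prime := ⟨hp⟩
  set N := sInf (resSet p K) with hN
  haveI hnorm : N.Normal := normal_sInf_resSet p K
  have hpq : IsPGroup p (↥K ⧸ N) := isPGroup_quot_sInf p hp K
  set F := {s : S // ∀ k ∈ pResidual H p K, k • s = s} with hF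
  -- K acts on F
  letI actK : MulAction ↥K F :=
  { smul := fun k s => ⟨(k : H) • s.1, fun x hx => by
      have h1 : ((k : H)⁻¹ * x * ((k : H)⁻¹)⁻¹) ∈ pResidual H p K :=
        pResidual_conj_mem p K hx k⁻¹
      rw [inv_inv] at h1
      rw [smul_smul, show x * (k : H) = (k : H) * ((k : H)⁻¹ * x * (k : H)) by group,
        ← smul_smul, s.2 _ h1]⟩
    one_smul := fun s => Subtype.ext (show (((1 : ↥K) : H)) • s.1 = s.1 by simp)
    mul_smul := fun a b s => Subtype.ext (by
      show ((a * b : ↥K) : H) • s.1 = (a : H) • ((b : H) • s.1)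
      rw [Subgroup.coe_mul, mul_smul]) }
  have hker : ∀ x : ↥K, x ∈ N → MulAction.toPermHom ↥K F x = 1 := by
    intro x hx
    ext s
    show (x : H) • s.1 = s.1
    exact s.2 _ (mem_pResidual p K hx)
  set ψ : ↥K ⧸ N →* Equiv.Perm F :=
    QuotientGroup.lift N (MulAction.toPermHom ↥K F)
      (fun x hx => MonoidHom.mem_ker.mpr (hker x hx)) with hψ
  letI actQ : MulAction (↥K ⧸ N) F :=
  { smul := fun q s => ψ q s
    one_smul := fun s => by show ψ 1 s = s; rw [map_one]; rfl
    mul_smul := fun a b s => by show ψ (a * b) s = ψ a (ψ b s); rw [map_mul]; rfl }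
  have hsmul_mk : ∀ (k : ↥K) (s : F),
      (QuotientGroup.mk k : ↥K ⧸ N) • s = k • s := fun k s => by
    show ψ (QuotientGroup.mk k) s = _
    rw [hψ, QuotientGroup.lift_mk]
    rfl
  have e : MulAction.fixedPoints (↥K ⧸ N) F ≃ {s : S // ∀ k ∈ K, k • s = s} :=
  { toFun := fun s => ⟨s.1.1, fun k hk => by
      have h1 := s.2 (QuotientGroup.mk (⟨k, hk⟩ : ↥K))
      rw [hsmul_mk] at h1
      exact congrArg Subtype.val h1⟩
    invFun := fun s => ⟨⟨s.1, fun x hx => by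
        obtain ⟨nn, -, rfl⟩ := hx
        exact s.2 _ nn.2⟩, by
      intro q
      induction q using QuotientGroup.induction_on with
      | H k =>
        rw [hsmul_mk]
        exact Subtype.ext (s.2 _ k.2)⟩
    left_inv := fun s => Subtype.ext (Subtype.ext rfl)
    right_inv := fun s => Subtype.ext rfl }
  have hcong : Nat.card F ≡ Nat.card (MulAction.fixedPoints (↥K ⧸ N) F) [MOD p] :=
    hpq.card_modEq_card_fixedPoints F
  have hcards : Nat.card (MulAction.fixedPoints (↥K ⧸ N) F)
      = Nat.card {s : S // ∀ k ∈ K, k • s = s} := Nat.card_congr e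
  have : Nat.card {s : S // ∀ k ∈ K, k • s = s} ≡ Nat.card F [MOD p] :=
    (hcards ▸ hcong).symm
  show (((Nat.card {s : S // ∀ k ∈ K, k • s = s} : ℤ)) : ZMod p) = _
  rw [show markVec H S (pResidual H p K) = (Nat.card F : ℤ) from rfl]
  push_cast
  exact_mod_cast (ZMod.natCast_eq_natCast_iff _ _ _).mpr this

lemma markVec_conj (S : Type) [MulAction H S] (g : H) (K : Subgroup H) :
    markVec H S (Subgroup.map (MulAut.conj g).toMonoidHom K) = markVec H S K := by
  have hmem : ∀ k ∈ K, g * k * g⁻¹ ∈ Subgroup.map (MulAut.conj g).toMonoidHom K :=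
    fun k hk => ⟨k, hk, by simp [MulAut.conj_apply]⟩
  have e : {s : S // ∀ k ∈ Subgroup.map (MulAut.conj g).toMonoidHom K, k • s = s}
      ≃ {s : S // ∀ k ∈ K, k • s = s} :=
  { toFun := fun s => ⟨g⁻¹ • s.1, fun k hk => by
      rw [smul_smul, show k * g⁻¹ = g⁻¹ * (g * k * g⁻¹) by group, ← smul_smul,
        s.2 _ (hmem k hk)]⟩
    invFun := fun s => ⟨g • s.1, fun k hk => by
      obtain ⟨x, hx, rfl⟩ := hk
      simp only [MulEquiv.coe_toMonoidHom, MulAut.conj_apply]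
      rw [smul_smul, show g * x * g⁻¹ * g = g * x by group, ← smul_smul, s.2 _ hx]⟩
    left_inv := fun s => Subtype.ext (by simp)
    right_inv := fun s => Subtype.ext (by simp) }
  unfold markVec
  exact_mod_cast congrArg Nat.cast (Nat.card_congr e)

lemma charHom_congr_zmod (p : ℕ) (hp : p.Prime) [Finite H] (K : Subgroup H)
    (x : BurnsideRing H) :
    ((charHom H K x : ZMod p)) = ((charHom H (pResidual H p K) x : ZMod p)) := by
  set f := (Int.castRingHom (ZMod p)).comp (Pi.evalRingHom (fun _ : Subgroup H => ℤ) K)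
  set g := (Int.castRingHom (ZMod p)).comp
    (Pi.evalRingHom (fun _ : Subgroup H => ℤ) (pResidual H p K))
  have hle : BurnsideRing H ≤ RingHom.eqLocus f g := by
    apply Subring.closure_le.mpr
    rintro v ⟨S, hS, m, rfl⟩
    show ((markVec H S K : ZMod p)) = ((markVec H S (pResidual H p K) : ZMod p))
    exact markVec_modEq p hp K S
  exact hle x.2

lemma charHom_conj (g : H) (K : Subgroup H) (x : BurnsideRing H) :
    charHom H (Subgroup.map (MulAut.conj g).toMonoidHom K) x = charHom H K x := by
  set f := Pi.evalRingHom (fun _ : Subgroup H => ℤ)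
    (Subgroup.map (MulAut.conj g).toMonoidHom K)
  set f' := Pi.evalRingHom (fun _ : Subgroup H => ℤ) K
  have hle : BurnsideRing H ≤ RingHom.eqLocus f f' := by
    apply Subring.closure_le.mpr
    rintro v ⟨S, hS, m, rfl⟩
    exact markVec_conj S g K
  exact hle x.2

lemma mem_idealP_iff (p : ℕ) (K : Subgroup H) (x : BurnsideRing H) :
    x ∈ idealP H K p ↔ ((charHom H K x : ZMod p)) = 0 := by
  rw [idealP, Ideal.mem_comap, Ideal.mem_span_singleton,
    ZMod.intCast_zmod_eq_zero_iff_dvd]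

lemma pResidual_eq_bot (p : ℕ) {K : Subgroup H} (hK : IsPGroup p ↥K) :
    pResidual H p K = ⊥ := by
  have hbot : (⊥ : Subgroup ↥K) ∈ resSet p K :=
    ⟨inferInstance, hK.to_quotient ⊥⟩
  have h1 : sInf (resSet p K) ≤ ⊥ := sInf_le hbot
  rw [pResidual_def, le_bot_iff.mp h1, Subgroup.map_bot]

end BurnsideAux

open BurnsideAux in
/-- For a finite group `H` and a prime `p`, two subgroups `K, L ⊆ H` determine the
same prime ideal `P(K, p) = P(L, p)` of the Burnside ring `A(H)` if `K[p]` and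
`L[p]` are conjugate in `H`; in particular, if `K` is a `p`-group then
`P(K, p) = P({1}, p)`. -/
theorem idealP_eq_of_pResidual_conj (H : Type) [Group H] [Finite H]
    (p : ℕ) (hp : p.Prime) (K L : Subgroup H)
    (h : ∃ g : H, Subgroup.map (MulAut.conj g).toMonoidHom (pResidual H p K) =
      pResidual H p L) :
    idealP H K p = idealP H L p ∧
      (∀ K' : Subgroup H, IsPGroup p ↥K' → idealP H K' p = idealP H (⊥ : Subgroup H) p) := by
  have key : ∀ K L : Subgroup H,
      (∃ g : H, Subgroup.map (MulAut.conj g).toMonoidHom (pResidual H p K) =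
        pResidual H p L) → idealP H K p = idealP H L p := by
    rintro K L ⟨g, hg⟩
    ext x
    rw [mem_idealP_iff, mem_idealP_iff]
    have h1 : ((charHom H K x : ZMod p)) = ((charHom H L x : ZMod p)) := by
      rw [charHom_congr_zmod p hp K x, charHom_congr_zmod p hp L x, ← hg,
        charHom_conj]
    rw [h1]
  refine ⟨key K L h, fun K' hK' => key K' ⊥ ⟨1, ?_⟩⟩
  rw [pResidual_eq_bot p hK', pResidual_eq_bot p (IsPGroup.of_bot), Subgroup.map_bot]
end
end
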